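/- Let f = (1/n)∑_{i=1}^n f_i with each f_i convex differentiable with L-Lipschitz gradient and x* a minimizer of f. For any x, with i uniform on {1,...,n} and v_i := −[∇f_i(x) − ∇f_i(x̃) + ∇f(x̃)], we have E_i[‖v_i‖²] ≤ 4L[f(x) − f(x*) + f(x̃) − f(x*)]. -/

import Mathlib

/-!
Write `aᵢ = ∇fᵢ(x) - ∇fᵢ(x*)` and `bᵢ = ∇fᵢ(x̃) - ∇fᵢ(x*)`. Since `∑ ∇fᵢ(x*) = 0`, the estimator is
`vᵢ = -(aᵢ - (bᵢ - b̄))` with `b̄` the mean of the `bᵢ`, so `E‖vᵢ‖² ≤ 2 E‖aᵢ‖² + 2 E‖bᵢ - b̄‖²`, and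
the variance `E‖bᵢ - b̄‖²` is at most the second moment `E‖bᵢ‖²`. For a convex `g` with
`L`-Lipschitz gradient, `‖∇g(y) - ∇g(x)‖² ≤ 2L (g y - g x - ⟪∇g x, y - x⟫)`; averaged over `i`
at `x = x*` the inner-product term vanishes, giving `E‖aᵢ‖² ≤ 2L (f(x) - f(x*))` and likewise
for `bᵢ`.
-/

open Finset RealInnerProductSpace

variable {E : Type*} [NormedAddCommGroup E] [InnerProductSpace ℝ E]

theorem sum_norm_sub_average_sq_le {ι : Type*} (s : Finset ι) (b : ι → E) :
    ∑ i ∈ s, ‖b i - (#s : ℝ)⁻¹ • ∑ j ∈ s, b j‖ ^ 2 ≤ ∑ i ∈ s, ‖b i‖ ^ 2 := by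
  rcases s.eq_empty_or_nonempty with rfl | hs
  · simp
  set m := (#s : ℝ)⁻¹ • ∑ j ∈ s, b j
  have hsum : ∑ j ∈ s, b j = (#s : ℝ) • m := by
    rw [smul_inv_smul₀ (by exact_mod_cast hs.card_pos.ne')]
  have hcross : ∑ i ∈ s, ⟪b i, m⟫ = #s * ‖m‖ ^ 2 := by
    rw [← sum_inner, hsum, real_inner_smul_left, real_inner_self_eq_norm_sq]
  simp only [norm_sub_sq_real, sum_add_distrib, sum_sub_distrib, ← mul_sum, hcross, sum_const,
    nsmul_eq_mul]
  nlinarith [mul_nonneg (Nat.cast_nonneg (α := ℝ) #s) (sq_nonneg ‖m‖)]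

theorem sum_norm_sub_add_average_sq_le {ι : Type*} (s : Finset ι) (a b : ι → E) :
    ∑ i ∈ s, ‖a i - b i + (#s : ℝ)⁻¹ • ∑ j ∈ s, b j‖ ^ 2 ≤
      2 * ∑ i ∈ s, ‖a i‖ ^ 2 + 2 * ∑ i ∈ s, ‖b i‖ ^ 2 := by
  set m := (#s : ℝ)⁻¹ • ∑ j ∈ s, b j
  have hpt : ∀ i ∈ s, ‖a i - b i + m‖ ^ 2 ≤ 2 * ‖a i‖ ^ 2 + 2 * ‖b i - m‖ ^ 2 := fun i _ => by
    have := parallelogram_law_with_norm ℝ (a i) (b i - m)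
    rw [show a i - b i + m = a i - (b i - m) by abel]
    nlinarith [sq_nonneg ‖a i + (b i - m)‖]
  calc ∑ i ∈ s, ‖a i - b i + m‖ ^ 2 ≤ ∑ i ∈ s, (2 * ‖a i‖ ^ 2 + 2 * ‖b i - m‖ ^ 2) :=
        sum_le_sum hpt
    _ = 2 * ∑ i ∈ s, ‖a i‖ ^ 2 + 2 * ∑ i ∈ s, ‖b i - m‖ ^ 2 := by
        rw [sum_add_distrib, mul_sum, mul_sum]
    _ ≤ 2 * ∑ i ∈ s, ‖a i‖ ^ 2 + 2 * ∑ i ∈ s, ‖b i‖ ^ 2 := by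
        linarith [sum_norm_sub_average_sq_le s b]

variable [CompleteSpace E] {g : E → ℝ} {g' : E} {G : E → E} {L : ℝ}

theorem HasGradientAt.hasDerivAt_comp_add_smul {a v : E} {t : ℝ}
    (h : HasGradientAt g g' (a + t • v)) :
    HasDerivAt (fun s : ℝ => g (a + s • v)) ⟪g', v⟫ t := by
  have hline : HasDerivAt (fun s : ℝ => a + s • v) v t := by
    simpa using ((hasDerivAt_id t).smul_const v).const_add a
  simpa [InnerProductSpace.toDual_apply_apply, Function.comp_def] using
    (hasGradientAt_iff_hasFDerivAt.mp h).comp_hasDerivAt t hline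

theorem IsLocalMin.hasGradientAt_eq_zero {a : E} (h : IsLocalMin g a) (hg : HasGradientAt g g' a) :
    g' = 0 :=
  (InnerProductSpace.toDual ℝ E).injective <| by
    rw [h.hasFDerivAt_eq_zero (hasGradientAt_iff_hasFDerivAt.mp hg), map_zero]

theorem HasGradientAt.const_mul_sum {ι : Type*} {s : Finset ι} {f : ι → E → ℝ} {f' : ι → E}
    {a : E} (h : ∀ i ∈ s, HasGradientAt (f i) (f' i) a) (c : ℝ) :
    HasGradientAt (fun z => c * ∑ i ∈ s, f i z) (c • ∑ i ∈ s, f' i) a := by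
  rw [hasGradientAt_iff_hasFDerivAt]
  simpa [map_sum] using
    (HasFDerivAt.fun_sum fun i hi => hasGradientAt_iff_hasFDerivAt.mp (h i hi)).const_mul c

theorem ConvexOn.add_inner_le_of_hasGradientAt (hc : ConvexOn ℝ Set.univ g) {a : E}
    (h : HasGradientAt g g' a) (b : E) : g a + ⟪g', b - a⟫ ≤ g b := by
  have hline : ConvexOn ℝ Set.univ (fun t : ℝ => g (a + t • (b - a))) := by
    simpa [Function.comp_def, AffineMap.lineMap_apply, add_comm] using
      hc.comp_affineMap (AffineMap.lineMap a b)
  have hd : HasDerivAt (fun t : ℝ => g (a + t • (b - a))) ⟪g', b - a⟫ 0 :=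
    HasGradientAt.hasDerivAt_comp_add_smul (by simpa using h)
  have := hline.le_slope_of_hasDerivAt (Set.mem_univ 0) (Set.mem_univ 1) one_pos hd
  simp only [slope_def_field, zero_smul, add_zero, one_smul, add_sub_cancel, sub_zero,
    div_one] at this
  linarith

theorem le_add_inner_add_of_lipschitz_gradient (hg : ∀ z, HasGradientAt g (G z) z)
    (hlip : ∀ p q, ‖G p - G q‖ ≤ L * ‖p - q‖) (a b : E) :
    g b ≤ g a + ⟪G a, b - a⟫ + L / 2 * ‖b - a‖ ^ 2 := by
  set v := b - a
  let ψ : ℝ → ℝ := fun t => g (a + t • v) - t * ⟪G a, v⟫ - L / 2 * t ^ 2 * ‖v‖ ^ 2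
  let ψ' : ℝ → ℝ := fun t => ⟪G (a + t • v), v⟫ - ⟪G a, v⟫ - L * t * ‖v‖ ^ 2
  have hψ : ∀ t, HasDerivAt ψ (ψ' t) t := fun t =>
    (((hg (a + t • v)).hasDerivAt_comp_add_smul.sub ((hasDerivAt_id t).mul_const ⟪G a, v⟫)).sub
      (((hasDerivAt_pow 2 t).const_mul (L / 2)).mul_const (‖v‖ ^ 2))).congr_deriv
      (by simp only [ψ', one_mul, Nat.cast_ofNat, pow_one, Nat.add_one_sub_one]; ring)
  have hψ'_nonpos : ∀ t ∈ Set.Ioo (0 : ℝ) 1, ψ' t ≤ 0 := fun t ht => by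
    have : ⟪G (a + t • v) - G a, v⟫ ≤ L * t * ‖v‖ ^ 2 :=
      calc ⟪G (a + t • v) - G a, v⟫ ≤ ‖G (a + t • v) - G a‖ * ‖v‖ := real_inner_le_norm _ _
        _ ≤ L * ‖(a + t • v) - a‖ * ‖v‖ := by gcongr; exact hlip _ _
        _ = L * t * ‖v‖ ^ 2 := by
          rw [add_sub_cancel_left, norm_smul, Real.norm_of_nonneg ht.1.le]; ring
    rw [inner_sub_left] at this
    simp only [ψ']
    linarith
  have hanti : AntitoneOn ψ (Set.Icc 0 1) :=
    antitoneOn_of_hasDerivWithinAt_nonpos (convex_Icc 0 1)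
      (fun t _ => (hψ t).continuousAt.continuousWithinAt)
      (fun t _ => (hψ t).hasDerivWithinAt) (by simpa using hψ'_nonpos)
  have := hanti (by simp) (by simp) zero_le_one
  simp only [ψ, v, zero_smul, add_zero, one_smul, add_sub_cancel, zero_mul, one_mul, sub_zero,
    one_pow, mul_one, ne_eq, OfNat.ofNat_ne_zero, not_false_eq_true, zero_pow, mul_zero] at this
  linarith

theorem ConvexOn.norm_gradient_sub_sq_le (hc : ConvexOn ℝ Set.univ g)
    (hg : ∀ z, HasGradientAt g (G z) z) (hL : 0 < L) (hlip : ∀ p q, ‖G p - G q‖ ≤ L * ‖p - q‖)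
    (a b : E) : ‖G a - G b‖ ^ 2 ≤ 2 * L * (g a - g b - ⟪G b, a - b⟫) := by
  set u := G a - G b
  -- `z` minimizes the quadratic upper bound at `a` minus the affine lower bound at `b`
  set z := a - L⁻¹ • u
  have hlow : g b + ⟪G b, z - b⟫ ≤ g z := hc.add_inner_le_of_hasGradientAt (hg b) z
  have hup : g z ≤ g a + ⟪G a, z - a⟫ + L / 2 * ‖z - a‖ ^ 2 :=
    le_add_inner_add_of_lipschitz_gradient hg hlip a z
  have hza : z - a = -(L⁻¹ • u) := by simp [z]
  have hzb : z - b = (a - b) - L⁻¹ • u := by simp only [z]; abel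
  have hu : ⟪G a, u⟫ - ⟪G b, u⟫ = ‖u‖ ^ 2 := by
    rw [← inner_sub_left, real_inner_self_eq_norm_sq]
  rw [hza, inner_neg_right, real_inner_smul_right, norm_neg, norm_smul, Real.norm_of_nonneg
    (inv_nonneg.mpr hL.le)] at hup
  rw [hzb, inner_sub_right, real_inner_smul_right] at hlow
  have key : ‖u‖ ^ 2 / (2 * L) ≤ g a - g b - ⟪G b, a - b⟫ := by
    have : L⁻¹ * ‖u‖ ^ 2 - L / 2 * (L⁻¹ * ‖u‖) ^ 2 = ‖u‖ ^ 2 / (2 * L) := by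
      field_simp; ring
    have hinner : L⁻¹ * ⟪G a, u⟫ - L⁻¹ * ⟪G b, u⟫ = L⁻¹ * ‖u‖ ^ 2 := by rw [← mul_sub, hu]
    linarith
  rwa [div_le_iff₀' (by positivity)] at key

theorem mul_sum_norm_gradient_sub_sq_le {ι : Type*} (s : Finset ι) {f : ι → E → ℝ}
    {G : ι → E → E} (hc : ∀ i, ConvexOn ℝ Set.univ (f i))
    (hg : ∀ i z, HasGradientAt (f i) (G i z) z) (hL : 0 < L) (hlip : ∀ i p q, ‖G i p - G i q‖ ≤ L * ‖p - q‖) {c : ℝ} (hc₀ : 0 ≤ c) {x : E}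
    (hx : c • ∑ i ∈ s, G i x = 0) (y : E) :
    c * ∑ i ∈ s, ‖G i y - G i x‖ ^ 2 ≤ 2 * L * (c * ∑ i ∈ s, f i y - c * ∑ i ∈ s, f i x) :=
  calc c * ∑ i ∈ s, ‖G i y - G i x‖ ^ 2
      ≤ c * ∑ i ∈ s, 2 * L * (f i y - f i x - ⟪G i x, y - x⟫) := by
        gcongr with i
        exact (hc i).norm_gradient_sub_sq_le (hg i) hL (hlip i) y x
    _ = 2 * L * (c * ∑ i ∈ s, f i y - c * ∑ i ∈ s, f i x) -
          2 * L * ⟪c • ∑ i ∈ s, G i x, y - x⟫ := by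
        rw [real_inner_smul_left, ← mul_sum, sum_sub_distrib, sum_sub_distrib, sum_inner]; ring
    _ = 2 * L * (c * ∑ i ∈ s, f i y - c * ∑ i ∈ s, f i x) := by
        rw [hx, inner_zero_left, mul_zero, sub_zero]

theorem svrg_variance_bound_general (d n : ℕ)
    (f : Fin n → EuclideanSpace ℝ (Fin d) → ℝ)
    (gradf : Fin n → EuclideanSpace ℝ (Fin d) → EuclideanSpace ℝ (Fin d))
    (hdiff : ∀ i x, HasGradientAt (f i) (gradf i x) x)
    (hconv : ∀ i, ConvexOn ℝ Set.univ (f i))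
    (L : ℝ) (hL : 0 < L)
    (hlip : ∀ i x y, ‖gradf i x - gradf i y‖ ≤ L * ‖x - y‖)
    (xstar : EuclideanSpace ℝ (Fin d))
    (hmin : ∀ x, (1 / (n : ℝ)) * ∑ i, f i xstar ≤ (1 / (n : ℝ)) * ∑ i, f i x)
    (x xtilde : EuclideanSpace ℝ (Fin d))
    (v : Fin n → EuclideanSpace ℝ (Fin d))
    (hv : ∀ i, v i = -(gradf i x - gradf i xtilde + (n : ℝ)⁻¹ • ∑ j, gradf j xtilde)) :
    (1 / (n : ℝ)) * ∑ i, ‖v i‖ ^ 2 ≤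
      4 * L * (((1 / (n : ℝ)) * ∑ i, f i x - (1 / (n : ℝ)) * ∑ i, f i xstar) +
        ((1 / (n : ℝ)) * ∑ i, f i xtilde - (1 / (n : ℝ)) * ∑ i, f i xstar)) := by
  have hcrit : (1 / (n : ℝ)) • ∑ i, gradf i xstar = 0 :=
    IsLocalMin.hasGradientAt_eq_zero (Filter.Eventually.of_forall hmin)
      (HasGradientAt.const_mul_sum (fun i _ => hdiff i xstar) _)
  have hbound := mul_sum_norm_gradient_sub_sq_le univ hconv hdiff hL hlip
    (by positivity : 0 ≤ 1 / (n : ℝ)) hcrit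
  have hv' : ∀ i, ‖v i‖ = ‖(gradf i x - gradf i xstar) - (gradf i xtilde - gradf i xstar) +
      (#(univ : Finset (Fin n)) : ℝ)⁻¹ • ∑ j, (gradf j xtilde - gradf j xstar)‖ := fun i => by
    rw [hv, norm_neg, card_fin, sum_sub_distrib, smul_sub, ← one_div, hcrit]
    congr 1
    abel
  simp_rw [hv']
  have hsplit := mul_le_mul_of_nonneg_left
    (sum_norm_sub_add_average_sq_le univ (fun i => gradf i x - gradf i xstar)
      (fun i => gradf i xtilde - gradf i xstar)) (by positivity : 0 ≤ 1 / (n : ℝ))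
  linarith [hbound x, hbound xtilde]

/-- Variance bound for the SVRG gradient estimator:
`E_i ‖v_i‖² ≤ 4L [f(x) − f(x*) + f(x̃) − f(x*)]`. -/
theorem svrg_variance_bound (d n : ℕ) (hn : 0 < n)
    (f : Fin n → EuclideanSpace ℝ (Fin d) → ℝ)
    (gradf : Fin n → EuclideanSpace ℝ (Fin d) → EuclideanSpace ℝ (Fin d))
    (hdiff : ∀ i x, HasGradientAt (f i) (gradf i x) x)
    (hconv : ∀ i, ConvexOn ℝ Set.univ (f i))
    (L : ℝ) (hL : 0 < L)
    (hlip : ∀ i x y, ‖gradf i x - gradf i y‖ ≤ L * ‖x - y‖)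
    (xstar : EuclideanSpace ℝ (Fin d))
    (hmin : ∀ x, (1 / (n : ℝ)) * ∑ i, f i xstar ≤ (1 / (n : ℝ)) * ∑ i, f i x)
    (x xtilde : EuclideanSpace ℝ (Fin d))
    (v : Fin n → EuclideanSpace ℝ (Fin d))
    (hv : ∀ i, v i = -(gradf i x - gradf i xtilde + (n : ℝ)⁻¹ • ∑ j, gradf j xtilde)) :
    (1 / (n : ℝ)) * ∑ i, ‖v i‖ ^ 2 ≤
      4 * L * (((1 / (n : ℝ)) * ∑ i, f i x - (1 / (n : ℝ)) * ∑ i, f i xstar) +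
        ((1 / (n : ℝ)) * ∑ i, f i xtilde - (1 / (n : ℝ)) * ∑ i, f i xstar)) :=
  svrg_variance_bound_general d n f gradf hdiff hconv L hL hlip xstar hmin x xtilde v hv
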